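/- arXiv:2510.05628 — 2 statements merged into one kernel-verified Lean document; each statement's English description precedes it below -/
import Mathlib

section
/- Given staircase data, the ideal generated by the staircase generators equals the defining ideal of the associated Ferrers configuration: Ideal.span {f₀, f₁, …, f_r} = ⋂_{i=1}^{t_r} ⋂_{j=1}^{α_i} ⟨Hᵢ, Vⱼ⟩; in particular this ideal is the defining ideal of an ACM set of points of ℙ¹×ℙ¹. -/
/- Common setup: R = ℂ[x₀,x₁,y₀,y₁] as MvPolynomial (Fin 4) ℂ with
   x₀ = X 0, x₁ = X 1, y₀ = X 2, y₁ = X 3.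
   `Hf a` is the horizontal form a₁x₀ - a₀x₁ of the point a = [a₀:a₁] ∈ ℙ¹;
   `Vf b` is the vertical form b₁y₀ - b₀y₁;
   `cross a b ≠ 0` says the (nonzero) pairs a, b are non-proportional,
   i.e. define distinct points of ℙ¹. -/

open MvPolynomial

noncomputable section

abbrev R : Type := MvPolynomial (Fin 4) ℂ

def Hf (a : ℂ × ℂ) : R := C a.2 * X 0 - C a.1 * X 1

def Vf (b : ℂ × ℂ) : R := C b.2 * X 2 - C b.1 * X 3

def cross (a b : ℂ × ℂ) : ℂ := a.1 * b.2 - a.2 * b.1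

/-- The defining ideal of the point P = A×B of ℙ¹×ℙ¹. -/
def Ipt (P : (ℂ × ℂ) × (ℂ × ℂ)) : Ideal R := Ideal.span {Hf P.1, Vf P.2}

/-- The defining ideal of a finite set of points (I_∅ = R = ⊤). -/
def Ipts (X : Finset ((ℂ × ℂ) × (ℂ × ℂ))) : Ideal R := X.inf Ipt

/-- The defining ideal of a set of points (I_∅ = R = ⊤). -/
def IptsSet (W : Set ((ℂ × ℂ) × (ℂ × ℂ))) : Ideal R := ⨅ P ∈ W, Ipt P

/-- Bihomogeneous: homogeneous separately in x₀,x₁ and in y₀,y₁. -/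
def Bihom (f : R) : Prop :=
  ∃ a b : ℕ, IsWeightedHomogeneous (![1,1,0,0] : Fin 4 → ℕ) f a ∧
    IsWeightedHomogeneous (![0,0,1,1] : Fin 4 → ℕ) f b

/-- `G` minimally generates `I`. -/
def MinGen (G : Finset R) (I : Ideal R) : Prop :=
  Ideal.span (G : Set R) = I ∧ ∀ g ∈ G, Ideal.span ((G : Set R) \ {g}) ≠ I

/-- Staircase data: r ≥ 1, 0 = t₀ < t₁ < ⋯ < t_r, 0 = s₀ < s₁ < ⋯ < s_r,
    pairwise distinct points A₁,…,A_{t_r} of ℙ¹ and pairwise distinct points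
    B₁,…,B_{s_r} of ℙ¹ (all indexed starting at 1). -/
structure Staircase where
  r : ℕ
  t : ℕ → ℕ
  s : ℕ → ℕ
  A : ℕ → ℂ × ℂ
  B : ℕ → ℂ × ℂ
  hr : 1 ≤ r
  ht0 : t 0 = 0
  hs0 : s 0 = 0
  ht : ∀ k, k < r → t k < t (k + 1)
  hs : ∀ k, k < r → s k < s (k + 1)
  hA0 : ∀ i ∈ Finset.Icc 1 (t r), A i ≠ 0
  hB0 : ∀ j ∈ Finset.Icc 1 (s r), B j ≠ 0
  hAd : ∀ i ∈ Finset.Icc 1 (t r), ∀ i' ∈ Finset.Icc 1 (t r), i ≠ i' → cross (A i) (A i') ≠ 0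
  hBd : ∀ j ∈ Finset.Icc 1 (s r), ∀ j' ∈ Finset.Icc 1 (s r), j ≠ j' → cross (B j) (B j') ≠ 0

/-- The staircase generator f_k = H₁⋯H_{t_k} · V₁⋯V_{s_{r-k}}. -/
def stairGen (S : Staircase) (k : ℕ) : R :=
  (∏ i ∈ Finset.Icc 1 (S.t k), Hf (S.A i)) * ∏ j ∈ Finset.Icc 1 (S.s (S.r - k)), Vf (S.B j)

/-!
Each `⟨H_A, V_B⟩` is prime, being the kernel of the parametrization `(u, v) ↦ (u A, v B)` of
the plane it cuts out. The whole computation then rests on one identity: if `J ≤ P` and `x` is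
a nonzerodivisor modulo `P`, then `(J + (x)) ∩ P = J + xP`. Adding the points of a row one
at a time gives `⋂_{j ≤ m} ⟨H, V_j⟩ = ⟨H, V₁⋯V_m⟩`; adding the rows of a Ferrers diagram one
at a time (`H₁⋯H_k` avoids every prime of row `k + 1`) shows that the intersection is
generated by the products `H₁⋯H_u · V₁⋯V_{α(u+1)}` together with `H₁⋯H_n`. The staircase
generators are the corners of this list, and every other product is a multiple of a corner.
-/

open Ideal Finset

section Grid

variable {T : Type*} [CommRing T]

theorem sup_span_singleton_inf_eq {J P : Ideal T} {x : T} (hJ : J ≤ P)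
    (hx : ∀ c, c * x ∈ P → c ∈ P) :
    (J ⊔ span {x}) ⊓ P = J ⊔ span {x} * P := by
  refine le_antisymm (fun g hg => ?_)
    (le_inf (sup_le_sup_left mul_le_left J) (sup_le hJ mul_le_right))
  obtain ⟨y, hy, z, hz, rfl⟩ := Submodule.mem_sup.mp (mem_inf.mp hg).1
  obtain ⟨c, rfl⟩ := mem_span_singleton'.mp hz
  have hc : c ∈ P := hx c (by simpa using P.sub_mem (mem_inf.mp hg).2 (hJ hy))
  exact Submodule.add_mem_sup hy (mul_comm x c ▸ mul_mem_mul (mem_span_singleton_self x) hc)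

theorem span_singleton_mul_span_pair (x y z : T) :
    span {x} * span {y, z} = span {x * y, x * z} := by
  simp only [span_insert (x := y), span_insert (x := x * y), Ideal.mul_sup,
    span_singleton_mul_span_singleton]

theorem mem_biInf_of_mul_mem {ι : Type*} {s : Finset ι} {P : ι → Ideal T} {x c : T}
    (hP : ∀ j ∈ s, (P j).IsPrime) (hx : ∀ j ∈ s, x ∉ P j)
    (h : c * x ∈ ⨅ j ∈ s, P j) :
    c ∈ ⨅ j ∈ s, P j := by
  simp only [Submodule.mem_iInf] at h ⊢
  exact fun j hj => ((hP j hj).mem_or_mem (h j hj)).resolve_right (hx j hj)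

def IsPrimeGrid (h v : ℕ → T) (n m : ℕ) : Prop :=
  ∀ i ∈ Icc 1 n, ∀ j ∈ Icc 1 m, (span {h i, v j}).IsPrime ∧
    (∀ i' ∈ Icc 1 n, i' ≠ i → h i' ∉ span {h i, v j}) ∧
    ∀ j' ∈ Icc 1 m, j' ≠ j → v j' ∉ span {h i, v j}

def ferrersGen (h v : ℕ → T) (α : ℕ → ℕ) (u : ℕ) : T :=
  (∏ i ∈ Icc 1 u, h i) * ∏ j ∈ Icc 1 (α (u + 1)), v j

namespace IsPrimeGrid

variable {h v : ℕ → T} {n m : ℕ}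

theorem iInf_span_pair_eq (hG : IsPrimeGrid h v n m) {i : ℕ} (hi : i ∈ Icc 1 n) :
    ∀ l ≤ m, ⨅ j ∈ Icc 1 l, span {h i, v j} = span {h i, ∏ j ∈ Icc 1 l, v j}
  | 0, _ => by simp [span_insert]
  | l + 1, hl => by
    have hl' : l + 1 ∈ Icc 1 m := mem_Icc.mpr ⟨by omega, hl⟩
    obtain ⟨hprime, -, hv⟩ := hG i hi (l + 1) hl'
    have hprod : ∏ j ∈ Icc 1 l, v j ∉ span {h i, v (l + 1)} := by
      rw [hprime.prod_mem_iff]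
      rintro ⟨j, hj, hjmem⟩
      exact hv j (Icc_subset_Icc_right (by omega) hj) (by grind) hjmem
    rw [prod_Icc_succ_top (by omega), ← insert_Icc_right_eq_Icc_add_one (by omega),
      Finset.iInf_insert, iInf_span_pair_eq hG hi l (by omega), inf_comm, span_insert,
      sup_span_singleton_inf_eq (span_mono (by simp))
        fun c hc => (hprime.mem_or_mem hc).resolve_right hprod,
      span_singleton_mul_span_pair, span_insert, ← sup_assoc,
      sup_eq_left.mpr (span_singleton_le_span_singleton.mpr (dvd_mul_left (h i) _)),
      ← span_insert]

theorem iInf_iInf_span_pair_eq (hG : IsPrimeGrid h v n m) {α : ℕ → ℕ}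
    (hα : AntitoneOn α (Set.Icc 1 n)) (hαm : ∀ i ∈ Icc 1 n, α i ≤ m) :
    ∀ k ≤ n, ⨅ i ∈ Icc 1 k, ⨅ j ∈ Icc 1 (α i), span {h i, v j} =
      span (ferrersGen h v α '' Set.Iio k) ⊔ span {∏ i ∈ Icc 1 k, h i}
  | 0, _ => by simp
  | k + 1, hk => by
    have hk' : k + 1 ∈ Icc 1 n := mem_Icc.mpr ⟨by omega, hk⟩
    have hcol := hG.iInf_span_pair_eq hk' (α (k + 1)) (hαm _ hk')
    have hJ : span (ferrersGen h v α '' Set.Iio k) ≤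
        span {h (k + 1), ∏ j ∈ Icc 1 (α (k + 1)), v j} := by
      refine span_le.mpr ?_
      rintro _ ⟨u, hu, rfl⟩
      have hαu : α (k + 1) ≤ α (u + 1) :=
        hα ⟨by omega, by grind⟩ ⟨by omega, hk⟩ (by grind)
      refine (span_mono (by simp) : span {∏ j ∈ Icc 1 (α (k + 1)), v j} ≤ _)
        (mem_span_singleton.mpr (Dvd.dvd.mul_left ?_ _))
      exact prod_dvd_prod_of_subset _ _ _ (Icc_subset_Icc_right hαu)
    have hjm : ∀ j ∈ Icc 1 (α (k + 1)), j ∈ Icc 1 m := fun j =>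
      (Icc_subset_Icc_right (hαm _ hk') ·)
    have hcolon : ∀ c, c * ∏ i ∈ Icc 1 k, h i ∈
        span {h (k + 1), ∏ j ∈ Icc 1 (α (k + 1)), v j} →
          c ∈ span {h (k + 1), ∏ j ∈ Icc 1 (α (k + 1)), v j} := by
      rw [← hcol]
      refine fun c => mem_biInf_of_mul_mem (fun j hj => (hG _ hk' j (hjm j hj)).1)
        fun j hj => ?_
      obtain ⟨hprime, hh, -⟩ := hG _ hk' j (hjm j hj)
      rw [hprime.prod_mem_iff]
      rintro ⟨i, hi, himem⟩
      exact hh i (Icc_subset_Icc_right (by omega) hi) (by grind) himem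
    have hIio : Set.Iio (k + 1) = insert k (Set.Iio k) := by ext; simp
    rw [prod_Icc_succ_top (by omega), ← insert_Icc_right_eq_Icc_add_one (by omega),
      Finset.iInf_insert, hcol, iInf_iInf_span_pair_eq hG hα hαm k (by omega), inf_comm,
      sup_span_singleton_inf_eq hJ hcolon, span_singleton_mul_span_pair, hIio,
      Set.image_insert_eq, ferrersGen]
    simp only [span_insert, sup_comm, sup_left_comm]

end IsPrimeGrid

end Grid

theorem exists_mul_add_mul_eq_one {K : Type*} [Field K] {a : K × K} (ha : a ≠ 0) :
    ∃ c d : K, c * a.1 + d * a.2 = 1 := by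
  by_cases h1 : a.1 = 0
  · exact ⟨0, a.2⁻¹, by simpa [h1] using inv_mul_cancel₀ fun h2 => ha (Prod.ext h1 h2)⟩
  · exact ⟨a.1⁻¹, 0, by simp [h1]⟩

/- `(u, v) ↦ (u • a, v • b)` parametrizes the plane `H_a = V_b = 0` of `ℂ⁴`. -/
def coneParam (a b : ℂ × ℂ) : R →ₐ[ℂ] MvPolynomial (Fin 2) ℂ :=
  aeval ![C a.1 * X 0, C a.2 * X 0, C b.1 * X 1, C b.2 * X 1]

theorem coneParam_Hf (a b a' : ℂ × ℂ) : coneParam a b (Hf a') = C (cross a a') * X 0 := by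
  simp only [coneParam, Hf, cross, map_sub, map_mul, aeval_X, aeval_C, algebraMap_eq,
    Matrix.cons_val]
  ring

theorem coneParam_Vf (a b b' : ℂ × ℂ) : coneParam a b (Vf b') = C (cross b b') * X 1 := by
  simp only [coneParam, Vf, cross, map_sub, map_mul, aeval_X, aeval_C, algebraMap_eq,
    Matrix.cons_val]
  ring

theorem ker_coneParam {a b : ℂ × ℂ} (ha : a ≠ 0) (hb : b ≠ 0) :
    RingHom.ker (coneParam a b) = Ipt (a, b) := by
  refine le_antisymm (fun f hf => ?_) (span_le.mpr ?_)
  · obtain ⟨c, d, hcd⟩ := exists_mul_add_mul_eq_one ha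
    obtain ⟨c', d', hcd'⟩ := exists_mul_add_mul_eq_one hb
    have hC : C c * C a.1 + C d * C a.2 = (1 : R) := by
      rw [← map_mul, ← map_mul, ← map_add, hcd, map_one]
    have hC' : C c' * C b.1 + C d' * C b.2 = (1 : R) := by
      rw [← map_mul, ← map_mul, ← map_add, hcd', map_one]
    -- `χ` sends `u, v` to linear forms dual to `a, b`, so `χ ∘ coneParam a b` fixes every
    -- variable modulo `Ipt (a, b)`.
    let χ : MvPolynomial (Fin 2) ℂ →ₐ[ℂ] R :=
      aeval ![C c * X 0 + C d * X 1, C c' * X 2 + C d' * X 3]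
    have hχ : (Quotient.mkₐ ℂ (Ipt (a, b))).comp (χ.comp (coneParam a b)) =
        Quotient.mkₐ ℂ (Ipt (a, b)) := by
      refine MvPolynomial.algHom_ext fun i => ?_
      rw [AlgHom.comp_apply, Quotient.mkₐ_eq_mk, Quotient.mk_eq_mk_iff_sub_mem, Ipt,
        mem_span_pair]
      fin_cases i <;>
        simp only [χ, coneParam, Hf, Vf, AlgHom.comp_apply, map_mul, aeval_X, aeval_C,
          algebraMap_eq, Fin.zero_eta, Fin.mk_one, Fin.reduceFinMk, Matrix.cons_val]
      · exact ⟨-C d, 0, by linear_combination (-X 0) * hC⟩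
      · exact ⟨C c, 0, by linear_combination (-X 1) * hC⟩
      · exact ⟨0, -C d', by linear_combination (-X 2) * hC'⟩
      · exact ⟨0, C c', by linear_combination (-X 3) * hC'⟩
    rw [← Quotient.eq_zero_iff_mem, ← Quotient.mkₐ_eq_mk ℂ, ← hχ, AlgHom.comp_apply,
      AlgHom.comp_apply, RingHom.mem_ker.mp hf, map_zero, map_zero]
  · rintro _ (rfl | rfl) <;> simp [coneParam_Hf, coneParam_Vf, cross, mul_comm]

theorem Ipt_isPrime {a b : ℂ × ℂ} (ha : a ≠ 0) (hb : b ≠ 0) : (Ipt (a, b)).IsPrime :=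
  ker_coneParam ha hb ▸ RingHom.ker_isPrime _

theorem Hf_notMem_Ipt {a b a' : ℂ × ℂ} (ha : a ≠ 0) (hb : b ≠ 0) (h : cross a a' ≠ 0) :
    Hf a' ∉ Ipt (a, b) := by
  rw [← ker_coneParam ha hb, RingHom.mem_ker, coneParam_Hf]
  exact mul_ne_zero (C_ne_zero.mpr h) (X_ne_zero 0)

theorem Vf_notMem_Ipt {a b b' : ℂ × ℂ} (ha : a ≠ 0) (hb : b ≠ 0) (h : cross b b' ≠ 0) :
    Vf b' ∉ Ipt (a, b) := by
  rw [← ker_coneParam ha hb, RingHom.mem_ker, coneParam_Vf]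
  exact mul_ne_zero (C_ne_zero.mpr h) (X_ne_zero 1)

namespace Staircase

variable (S : Staircase)

theorem isPrimeGrid :
    IsPrimeGrid (fun i => Hf (S.A i)) (fun j => Vf (S.B j)) (S.t S.r) (S.s S.r) :=
  fun i hi j hj => ⟨Ipt_isPrime (S.hA0 i hi) (S.hB0 j hj),
    fun i' hi' hne => Hf_notMem_Ipt (S.hA0 i hi) (S.hB0 j hj) (S.hAd i hi i' hi' hne.symm),
    fun j' hj' hne => Vf_notMem_Ipt (S.hA0 i hi) (S.hB0 j hj) (S.hBd j hj j' hj' hne.symm)⟩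

theorem t_strictMonoOn : StrictMonoOn S.t (Set.Iic S.r) :=
  strictMonoOn_Iic_of_lt_succ S.ht

theorem s_monotoneOn : MonotoneOn S.s (Set.Iic S.r) :=
  (strictMonoOn_Iic_of_lt_succ S.hs).monotoneOn

theorem exists_level {i : ℕ} (hi0 : 0 < i) (hi : i ≤ S.t S.r) :
    ∃ k < S.r, S.t k < i ∧ i ≤ S.t (k + 1) := by
  classical
  have hex : ∃ k, i ≤ S.t k := ⟨S.r, hi⟩
  have hpos : Nat.find hex ≠ 0 := fun h => by
    have := Nat.find_spec hex
    rw [h, S.ht0] at this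
    omega
  refine ⟨Nat.find hex - 1, ?_, ?_, ?_⟩
  · have := Nat.find_min' hex hi
    omega
  · exact not_le.mp (Nat.find_min hex (by omega))
  · rw [Nat.sub_add_cancel (Nat.one_le_iff_ne_zero.mpr hpos)]
    exact Nat.find_spec hex

def IsRowLengths (α : ℕ → ℕ) : Prop :=
  ∀ k, k < S.r → ∀ i, S.t k < i → i ≤ S.t (k + 1) → α i = S.s (S.r - k)

variable {S} {α : ℕ → ℕ}

theorem IsRowLengths.antitoneOn (hα : S.IsRowLengths α) :
    AntitoneOn α (Set.Icc 1 (S.t S.r)) := by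
  intro i hi i' hi' hii'
  obtain ⟨k, hk, hki, hik⟩ := S.exists_level hi.1 hi.2
  obtain ⟨k', hk', hki', hik'⟩ := S.exists_level (by grind) hi'.2
  have hkk' : k ≤ k' := by
    by_contra! h
    have := S.t_strictMonoOn.monotoneOn (by grind) (by grind) (show k' + 1 ≤ k by omega)
    omega
  rw [hα k hk i hki hik, hα k' hk' i' hki' hik']
  exact S.s_monotoneOn (by grind) (by grind) (by omega)

theorem IsRowLengths.le (hα : S.IsRowLengths α) :
    ∀ i ∈ Icc 1 (S.t S.r), α i ≤ S.s S.r := by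
  intro i hi
  obtain ⟨k, hk, hki, hik⟩ := S.exists_level (mem_Icc.mp hi).1 (mem_Icc.mp hi).2
  rw [hα k hk i hki hik]
  exact S.s_monotoneOn (by grind) (by grind) (by omega)

theorem IsRowLengths.span_stairGen_eq (hα : S.IsRowLengths α) : span (stairGen S '' Set.Iic S.r) =
    span (ferrersGen (fun i => Hf (S.A i)) (fun j => Vf (S.B j)) α '' Set.Iio (S.t S.r)) ⊔
      span {∏ i ∈ Icc 1 (S.t S.r), Hf (S.A i)} := by
  have hcorner : ∀ k < S.r, stairGen S k = ferrersGen _ _ α (S.t k) := fun k hk => by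
    rw [ferrersGen, hα k hk (S.t k + 1) (by omega) (S.ht k hk), stairGen]
  have htop : stairGen S S.r = ∏ i ∈ Icc 1 (S.t S.r), Hf (S.A i) := by
    simp [stairGen, S.hs0]
  refine le_antisymm (span_le.mpr ?_) (sup_le (span_le.mpr ?_) ?_)
  · rintro _ ⟨k, hk, rfl⟩
    rcases (Set.mem_Iic.mp hk).lt_or_eq with hk | rfl
    · rw [hcorner k hk]
      exact mem_sup_left (subset_span ⟨S.t k, S.t_strictMonoOn hk.le (le_refl S.r) hk, rfl⟩)
    · rw [htop]
      exact mem_sup_right (mem_span_singleton_self _)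
  · rintro _ ⟨u, hu, rfl⟩
    obtain ⟨k, hk, hku, huk⟩ := S.exists_level (Nat.succ_pos u) hu
    refine mem_of_dvd _ ?_ (subset_span ⟨k, Set.mem_Iic.mpr hk.le, rfl⟩)
    rw [stairGen, ferrersGen, hα k hk (u + 1) hku huk]
    exact mul_dvd_mul_right (prod_dvd_prod_of_subset _ _ _ (Icc_subset_Icc_right (by omega))) _
  · rw [← htop, span_singleton_le_iff_mem]
    exact subset_span ⟨S.r, le_refl S.r, rfl⟩

end Staircase

/-- Lemma 2.11: the ideal generated by the staircase generators f₀,…,f_r equals the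
defining ideal of the associated Ferrers configuration (an ACM set of points), where
αᵢ = s_{r-k} for t_k < i ≤ t_{k+1}. -/
theorem statement3 (S : Staircase) (α : ℕ → ℕ)
    (hα : ∀ k, k < S.r → ∀ i, S.t k < i → i ≤ S.t (k + 1) → α i = S.s (S.r - k)) :
    Ideal.span (stairGen S '' Set.Iic S.r) =
      ⨅ i ∈ Finset.Icc 1 (S.t S.r), ⨅ j ∈ Finset.Icc 1 (α i), Ipt (S.A i, S.B j) := by
  have hα' : S.IsRowLengths α := hα
  rw [hα'.span_stairGen_eq]
  exact (S.isPrimeGrid.iInf_iInf_span_pair_eq hα'.antitoneOn hα'.le _ le_rfl).symm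
end
end

section
/- Given staircase data, let S be any nonempty subset of the staircase generators {f₀,…,f_r}. Then there exist integers a, b with 0 ≤ a ≤ t_r and 0 ≤ b ≤ s_r and a finite set Y of points of ℙ¹×ℙ¹ (possibly empty) which is a Ferrers configuration built on the points {Aᵢ : a < i ≤ t_r} and {Bⱼ : b < j ≤ s_r} — so that no point of Y lies on any of the lines H₁,…,H_a, V₁,…,V_b — such that Ideal.span S = ⟨H₁⋯H_a · V₁⋯V_b⟩ * I_Y (empty products being 1 and I_∅ = R). In other words, the ideal generated by any nonempty subset of the staircase generators is the defining ideal of a union of lines and ACM points. -/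
/- Common setup: R = ℂ[x₀,x₁,y₀,y₁] as MvPolynomial (Fin 4) ℂ with
   x₀ = X 0, x₁ = X 1, y₀ = X 2, y₁ = X 3.
   `Hf a` is the horizontal form a₁x₀ - a₀x₁ of the point a = [a₀:a₁] ∈ ℙ¹;
   `Vf b` is the vertical form b₁y₀ - b₀y₁;
   `cross a b ≠ 0` says the (nonzero) pairs a, b are non-proportional,
   i.e. define distinct points of ℙ¹. -/

open MvPolynomial

noncomputable section

/-- A Ferrers configuration {Aᵢ×Bⱼ : 1 ≤ i ≤ h, 1 ≤ j ≤ αᵢ} for pairwise distinct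
    points A₁,…,A_h of ℙ¹, pairwise distinct B₁,…,B_{α₁} of ℙ¹ and
    α₁ ≥ ⋯ ≥ α_h ≥ 1.  These are exactly the ACM finite sets of points of ℙ¹×ℙ¹. -/
def IsFerrers (W : Set ((ℂ × ℂ) × (ℂ × ℂ))) : Prop :=
  ∃ (h : ℕ) (α : ℕ → ℕ) (A B : ℕ → ℂ × ℂ),
    1 ≤ h ∧
    (∀ i, 1 ≤ i → i ≤ h → 1 ≤ α i) ∧
    (∀ i, 1 ≤ i → i + 1 ≤ h → α (i + 1) ≤ α i) ∧
    (∀ i, 1 ≤ i → i ≤ h → A i ≠ 0) ∧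
    (∀ j, 1 ≤ j → j ≤ α 1 → B j ≠ 0) ∧
    (∀ i i', 1 ≤ i → i ≤ h → 1 ≤ i' → i' ≤ h → i ≠ i' → cross (A i) (A i') ≠ 0) ∧
    (∀ j j', 1 ≤ j → j ≤ α 1 → 1 ≤ j' → j' ≤ α 1 → j ≠ j' → cross (B j) (B j') ≠ 0) ∧
    W = {P | ∃ i j, 1 ≤ i ∧ i ≤ h ∧ 1 ≤ j ∧ j ≤ α i ∧ P = (A i, B j)}

/-- a dual pair: a.1 * (dual a).2 - a.2 * (dual a).1 = 1 when a ≠ 0. -/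
def dual (a : ℂ × ℂ) : ℂ × ℂ := if a.1 ≠ 0 then (0, a.1⁻¹) else (-a.2⁻¹, 0)

lemma dual_spec {a : ℂ × ℂ} (ha : a ≠ 0) :
    a.1 * (dual a).2 - a.2 * (dual a).1 = 1 := by
  unfold dual
  by_cases h : a.1 = 0
  · have h2 : a.2 ≠ 0 := by
      intro h2; exact ha (Prod.ext h h2)
    simp [h, h2]
  · simp [h]

lemma dual_ne {a : ℂ × ℂ} (ha : a ≠ 0) : dual a ≠ 0 := by
  intro h
  have := dual_spec ha
  rw [h] at this; simp at this

lemma Hf_ne_zero {a : ℂ × ℂ} (ha : a ≠ 0) : Hf a ≠ 0 := by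
  intro h
  by_cases h2 : a.2 = 0
  · have h1 : a.1 ≠ 0 := fun h1 => ha (Prod.ext h1 h2)
    have := congrArg (eval fun i : Fin 4 => if i = 1 then 1 else 0) h
    simp [Hf, h2] at this
    exact h1 this
  · have := congrArg (eval fun i : Fin 4 => if i = 0 then 1 else 0) h
    simp [Hf] at this
    exact h2 this

lemma Vf_ne_zero {b : ℂ × ℂ} (hb : b ≠ 0) : Vf b ≠ 0 := by
  intro h
  by_cases h2 : b.2 = 0
  · have h1 : b.1 ≠ 0 := fun h1 => hb (Prod.ext h1 h2)
    have := congrArg (eval fun i : Fin 4 => if i = 3 then 1 else 0) h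
    simp [Vf, h2] at this
    exact h1 this
  · have := congrArg (eval fun i : Fin 4 => if i = 2 then 1 else 0) h
    simp [Vf] at this
    exact h2 this

/-- The substitution killing exactly ⟨Hf a, Vf b⟩. -/
def phi (a b : ℂ × ℂ) : R →ₐ[ℂ] R :=
  aeval ![C a.1 * Hf (dual a), C a.2 * Hf (dual a), C b.1 * Vf (dual b), C b.2 * Vf (dual b)]

lemma phi_X0 (a b : ℂ × ℂ) : phi a b (X 0) = C a.1 * Hf (dual a) := by simp [phi]
lemma phi_X1 (a b : ℂ × ℂ) : phi a b (X 1) = C a.2 * Hf (dual a) := by simp [phi]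
lemma phi_X2 (a b : ℂ × ℂ) : phi a b (X 2) = C b.1 * Vf (dual b) := by simp [phi]
lemma phi_X3 (a b : ℂ × ℂ) : phi a b (X 3) = C b.2 * Vf (dual b) := by simp [phi]

lemma phi_Hf (a b c : ℂ × ℂ) : phi a b (Hf c) = - C (cross c a) * Hf (dual a) := by
  unfold phi Hf cross
  simp only [map_sub, map_mul, aeval_X, aeval_C, Matrix.cons_val_zero, Matrix.cons_val_one,
    Matrix.head_cons, MvPolynomial.algebraMap_eq, C_sub, C_mul]
  ring

lemma phi_Vf (a b c : ℂ × ℂ) : phi a b (Vf c) = - C (cross c b) * Vf (dual b) := by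
  unfold phi Vf cross
  simp [C_sub, C_mul]
  ring

lemma phi_Hf_ne {a c : ℂ × ℂ} (b : ℂ × ℂ) (ha : a ≠ 0) (hc : cross c a ≠ 0) :
    phi a b (Hf c) ≠ 0 := by
  rw [phi_Hf]
  exact mul_ne_zero (neg_ne_zero.2 (fun h => hc (by simpa using congrArg (coeff 0) h)))
    (Hf_ne_zero (dual_ne ha))

lemma phi_Vf_ne {b c : ℂ × ℂ} (a : ℂ × ℂ) (hb : b ≠ 0) (hc : cross c b ≠ 0) :
    phi a b (Vf c) ≠ 0 := by
  rw [phi_Vf]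
  exact mul_ne_zero (neg_ne_zero.2 (fun h => hc (by simpa using congrArg (coeff 0) h)))
    (Vf_ne_zero (dual_ne hb))

lemma phi_Hf_self (a b : ℂ × ℂ) : phi a b (Hf a) = 0 := by
  rw [phi_Hf]
  have : cross a a = 0 := by unfold cross; ring
  simp [this]

lemma phi_Vf_self (a b : ℂ × ℂ) : phi a b (Vf b) = 0 := by
  rw [phi_Vf]
  have : cross b b = 0 := by unfold cross; ring
  simp [this]

lemma sub_phi_mem {a b : ℂ × ℂ} (ha : a ≠ 0) (hb : b ≠ 0) (p : R) :
    p - phi a b p ∈ Ideal.span {Hf a, Vf b} := by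
  have hgen : ∀ i : Fin 4, X i - phi a b (X i) ∈ Ideal.span {Hf a, Vf b} := by
    have hH : Hf a ∈ Ideal.span {Hf a, Vf b} :=
      Ideal.subset_span (by simp)
    have hV : Vf b ∈ Ideal.span {Hf a, Vf b} :=
      Ideal.subset_span (by simp)
    have keyA : C a.1 * C (dual a).2 - C a.2 * C (dual a).1 = (1 : R) := by
      rw [← C_mul, ← C_mul, ← C_sub, dual_spec ha]; simp
    have keyB : C b.1 * C (dual b).2 - C b.2 * C (dual b).1 = (1 : R) := by
      rw [← C_mul, ← C_mul, ← C_sub, dual_spec hb]; simp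
    intro i
    fin_cases i
    · show X 0 - phi a b (X 0) ∈ _
      rw [phi_X0, show X 0 - C a.1 * Hf (dual a) = (- C (dual a).1) * Hf a by
        unfold Hf; linear_combination (-(X 0) : R) * keyA]
      exact Ideal.mul_mem_left _ _ hH
    · show X 1 - phi a b (X 1) ∈ _
      rw [phi_X1, show X 1 - C a.2 * Hf (dual a) = (- C (dual a).2) * Hf a by
        unfold Hf; linear_combination (-(X 1) : R) * keyA]
      exact Ideal.mul_mem_left _ _ hH
    · show X 2 - phi a b (X 2) ∈ _
      rw [phi_X2, show X 2 - C b.1 * Vf (dual b) = (- C (dual b).1) * Vf b by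
        unfold Vf; linear_combination (-(X 2) : R) * keyB]
      exact Ideal.mul_mem_left _ _ hV
    · show X 3 - phi a b (X 3) ∈ _
      rw [phi_X3, show X 3 - C b.2 * Vf (dual b) = (- C (dual b).2) * Vf b by
        unfold Vf; linear_combination (-(X 3) : R) * keyB]
      exact Ideal.mul_mem_left _ _ hV
  induction p using MvPolynomial.induction_on with
  | C c => simp [phi]
  | add p q hp hq =>
      have : p + q - phi a b (p + q) = (p - phi a b p) + (q - phi a b q) := by
        rw [map_add]; ring
      rw [this]; exact Ideal.add_mem _ hp hq
  | mul_X p i hp =>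
      have : p * X i - phi a b (p * X i) =
          (p - phi a b p) * X i + phi a b p * (X i - phi a b (X i)) := by
        rw [map_mul]; ring
      rw [this]
      exact Ideal.add_mem _ (Ideal.mul_mem_right _ _ hp) (Ideal.mul_mem_left _ _ (hgen i))

lemma mem_span_iff_phi {a b : ℂ × ℂ} (ha : a ≠ 0) (hb : b ≠ 0) {p : R} :
    p ∈ Ideal.span {Hf a, Vf b} ↔ phi a b p = 0 := by
  constructor
  · intro hp
    obtain ⟨x, y, hxy⟩ := Ideal.mem_span_pair.1 hp
    rw [← hxy, map_add, map_mul, map_mul, phi_Hf_self, phi_Vf_self, mul_zero, mul_zero, add_zero]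
  · intro hp
    have := sub_phi_mem ha hb p
    rwa [hp, sub_zero] at this

lemma mem_of_mul_mem {a b : ℂ × ℂ} (ha : a ≠ 0) (hb : b ≠ 0) {p q : R}
    (h : p * q ∈ Ideal.span {Hf a, Vf b}) (hq : phi a b q ≠ 0) :
    p ∈ Ideal.span {Hf a, Vf b} := by
  rw [mem_span_iff_phi ha hb] at h ⊢
  rw [map_mul] at h
  exact (mul_eq_zero.1 h).resolve_right hq

lemma phi_prodH_ne {a : ℂ × ℂ} (b : ℂ × ℂ) (ha : a ≠ 0) (T : Finset ℕ) (A : ℕ → ℂ × ℂ)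
    (h : ∀ i ∈ T, cross (A i) a ≠ 0) : phi a b (∏ i ∈ T, Hf (A i)) ≠ 0 := by
  rw [map_prod]
  exact Finset.prod_ne_zero_iff.2 fun i hi => phi_Hf_ne b ha (h i hi)

lemma phi_prodV_ne {b : ℂ × ℂ} (a : ℂ × ℂ) (hb : b ≠ 0) (T : Finset ℕ) (B : ℕ → ℂ × ℂ)
    (h : ∀ j ∈ T, cross (B j) b ≠ 0) : phi a b (∏ j ∈ T, Vf (B j)) ≠ 0 := by
  rw [map_prod]
  exact Finset.prod_ne_zero_iff.2 fun j hj => phi_Vf_ne a hb (h j hj)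

lemma dvd_mem_span_pair_left {x y g : R} (h : x ∣ g) : g ∈ Ideal.span {x, y} := by
  obtain ⟨c, rfl⟩ := h
  exact Ideal.mul_mem_right _ _ (Ideal.subset_span (by simp))

lemma dvd_mem_span_pair_right {x y g : R} (h : y ∣ g) : g ∈ Ideal.span {x, y} := by
  obtain ⟨c, rfl⟩ := h
  exact Ideal.mul_mem_right _ _ (Ideal.subset_span (by simp))

lemma mem_biInf_iff {T : Finset ℕ} {I : ℕ → Ideal R} {p : R} :
    (p ∈ ⨅ j ∈ T, I j) ↔ ∀ j ∈ T, p ∈ I j := by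
  simp [Submodule.mem_iInf]

lemma row_lemma (a : ℂ × ℂ) (ha : a ≠ 0) (B : ℕ → ℂ × ℂ) (T : Finset ℕ)
    (hB0 : ∀ j ∈ T, B j ≠ 0)
    (hBd : ∀ j ∈ T, ∀ j' ∈ T, j ≠ j' → cross (B j) (B j') ≠ 0) :
    Ideal.span {Hf a, ∏ j ∈ T, Vf (B j)} = ⨅ j ∈ T, Ideal.span {Hf a, Vf (B j)} := by
  classical
  induction T using Finset.induction_on with
  | empty => simp [Ideal.eq_top_iff_one, dvd_mem_span_pair_right]
  | @insert j T hj ih =>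
      have hB0' : ∀ j' ∈ T, B j' ≠ 0 := fun j' hj' => hB0 j' (Finset.mem_insert_of_mem hj')
      have hBd' : ∀ x ∈ T, ∀ x' ∈ T, x ≠ x' → cross (B x) (B x') ≠ 0 := fun x hx x' hx' h =>
        hBd x (Finset.mem_insert_of_mem hx) x' (Finset.mem_insert_of_mem hx') h
      have hBj : B j ≠ 0 := hB0 j (Finset.mem_insert_self j T)
      rw [Finset.prod_insert hj]
      apply le_antisymm
      · apply le_iInf₂
        intro j' hj'
        apply Ideal.span_le.2
        rintro g (rfl | rfl)
        · exact Ideal.subset_span (Set.mem_insert _ _)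
        · rcases Finset.mem_insert.1 hj' with rfl | hj'
          · exact dvd_mem_span_pair_right (dvd_mul_right _ _)
          · exact dvd_mem_span_pair_right ((Finset.dvd_prod_of_mem _ hj').mul_left _)
      · intro p hp
        have hp1 : p ∈ Ideal.span {Hf a, Vf (B j)} :=
          mem_biInf_iff.1 hp j (Finset.mem_insert_self j T)
        have hp2 : p ∈ Ideal.span {Hf a, ∏ j' ∈ T, Vf (B j')} := by
          rw [ih hB0' hBd']
          exact mem_biInf_iff.2 fun j' hj' => mem_biInf_iff.1 hp j' (Finset.mem_insert_of_mem hj')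
        obtain ⟨x, y, hxy⟩ := Ideal.mem_span_pair.1 hp2
        have hyP : y * ∏ j' ∈ T, Vf (B j') ∈ Ideal.span {Hf a, Vf (B j)} := by
          have heq : y * ∏ j' ∈ T, Vf (B j') = p - x * Hf a := by linear_combination hxy
          rw [heq]
          exact Ideal.sub_mem _ hp1 (Ideal.mul_mem_left _ _ (Ideal.subset_span (Set.mem_insert _ _)))
        have hy : y ∈ Ideal.span {Hf a, Vf (B j)} :=
          mem_of_mul_mem ha hBj hyP
            (phi_prodV_ne a hBj T B fun j' hj' =>
              hBd j' (Finset.mem_insert_of_mem hj') j (Finset.mem_insert_self j T)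
                (fun h => hj (h ▸ hj')))
        obtain ⟨x', y', hxy'⟩ := Ideal.mem_span_pair.1 hy
        exact Ideal.mem_span_pair.2 ⟨x + x' * ∏ j' ∈ T, Vf (B j'), y',
          by linear_combination hxy + (∏ j' ∈ T, Vf (B j')) * hxy'⟩

lemma col_lemma (A B : ℕ → ℂ × ℂ) (TA TB : Finset ℕ)
    (hA0 : ∀ i ∈ TA, A i ≠ 0)
    (hAd : ∀ i ∈ TA, ∀ i' ∈ TA, i ≠ i' → cross (A i) (A i') ≠ 0)
    (hB0 : ∀ j ∈ TB, B j ≠ 0)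
    (hBd : ∀ j ∈ TB, ∀ j' ∈ TB, j ≠ j' → cross (B j) (B j') ≠ 0) :
    Ideal.span {∏ i ∈ TA, Hf (A i), ∏ j ∈ TB, Vf (B j)} =
      ⨅ i ∈ TA, Ideal.span {Hf (A i), ∏ j ∈ TB, Vf (B j)} := by
  classical
  induction TA using Finset.induction_on with
  | empty => simp [Ideal.eq_top_iff_one, dvd_mem_span_pair_left]
  | @insert i T hi ih =>
      have hA0' : ∀ i' ∈ T, A i' ≠ 0 := fun i' hi' => hA0 i' (Finset.mem_insert_of_mem hi')
      have hAd' : ∀ x ∈ T, ∀ x' ∈ T, x ≠ x' → cross (A x) (A x') ≠ 0 := fun x hx x' hx' h =>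
        hAd x (Finset.mem_insert_of_mem hx) x' (Finset.mem_insert_of_mem hx') h
      have hAi : A i ≠ 0 := hA0 i (Finset.mem_insert_self i T)
      rw [Finset.prod_insert hi]
      apply le_antisymm
      · apply le_iInf₂
        intro i' hi'
        apply Ideal.span_le.2
        rintro g (rfl | rfl)
        · rcases Finset.mem_insert.1 hi' with rfl | hi'
          · exact dvd_mem_span_pair_left (dvd_mul_right _ _)
          · exact dvd_mem_span_pair_left ((Finset.dvd_prod_of_mem _ hi').mul_left _)
        · exact dvd_mem_span_pair_right dvd_rfl
      · intro p hp
        have hp1 : p ∈ Ideal.span {Hf (A i), ∏ j ∈ TB, Vf (B j)} :=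
          mem_biInf_iff.1 hp i (Finset.mem_insert_self i T)
        have hp2 : p ∈ Ideal.span {∏ i' ∈ T, Hf (A i'), ∏ j ∈ TB, Vf (B j)} := by
          rw [ih hA0' hAd']
          exact mem_biInf_iff.2 fun i' hi' => mem_biInf_iff.1 hp i' (Finset.mem_insert_of_mem hi')
        obtain ⟨x, y, hxy⟩ := Ideal.mem_span_pair.1 hp2
        have hxP : x * ∏ i' ∈ T, Hf (A i') ∈ Ideal.span {Hf (A i), ∏ j ∈ TB, Vf (B j)} := by
          have heq : x * ∏ i' ∈ T, Hf (A i') = p - y * ∏ j ∈ TB, Vf (B j) := by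
            linear_combination hxy
          rw [heq]
          exact Ideal.sub_mem _ hp1
            (Ideal.mul_mem_left _ _ (Ideal.subset_span (Set.mem_insert_of_mem _ rfl)))
        have hrow := row_lemma (A i) hAi B TB hB0 hBd
        have hx : x ∈ Ideal.span {Hf (A i), ∏ j ∈ TB, Vf (B j)} := by
          rw [hrow] at hxP ⊢
          refine mem_biInf_iff.2 fun j hj => ?_
          refine mem_of_mul_mem hAi (hB0 j hj) (mem_biInf_iff.1 hxP j hj) ?_
          exact phi_prodH_ne (B j) hAi T A fun i' hi' =>
            hAd i' (Finset.mem_insert_of_mem hi') i (Finset.mem_insert_self i T)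
              (fun h => hi (h ▸ hi'))
        obtain ⟨x', y', hxy'⟩ := Ideal.mem_span_pair.1 hx
        exact Ideal.mem_span_pair.2 ⟨x', y' * ∏ i' ∈ T, Hf (A i') + y,
          by linear_combination hxy + (∏ i' ∈ T, Hf (A i')) * hxy'⟩

lemma steps_mono {u : ℕ → ℕ} {m : ℕ} (h : ∀ l, l < m → u l ≤ u (l + 1)) :
    ∀ l l', l ≤ l' → l' ≤ m → u l ≤ u l' := by
  intro l l' h1 h2
  induction l' with
  | zero => exact Nat.le_zero.1 h1 ▸ le_rfl
  | succ n ih =>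
      rcases Nat.eq_or_lt_of_le h1 with rfl | hlt
      · exact le_rfl
      · exact le_trans (ih (by omega) (by omega)) (h n (by omega))

lemma steps_anti {v : ℕ → ℕ} {m : ℕ} (h : ∀ l, l < m → v (l + 1) ≤ v l) :
    ∀ l l', l ≤ l' → l' ≤ m → v l' ≤ v l := by
  intro l l' h1 h2
  induction l' with
  | zero => exact Nat.le_zero.1 h1 ▸ le_rfl
  | succ n ih =>
      rcases Nat.eq_or_lt_of_le h1 with rfl | hlt
      · exact le_rfl
      · exact le_trans (h n (by omega)) (ih (by omega) (by omega))

lemma exists_block {u : ℕ → ℕ} {m i : ℕ} (h0 : u 0 < i) (h1 : i ≤ u m) :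
    ∃ l, l < m ∧ u l < i ∧ i ≤ u (l + 1) := by
  induction m with
  | zero => omega
  | succ n ih =>
      by_cases h : i ≤ u n
      · obtain ⟨l, hl, h2, h3⟩ := ih h
        exact ⟨l, by omega, h2, h3⟩
      · exact ⟨n, by omega, by omega, h1⟩

lemma main_lemma (A B : ℕ → ℂ × ℂ) (m : ℕ) (c : ℕ) (u v : ℕ → ℕ)
    (hu0 : u 0 = c)
    (hu : ∀ l, l < m → u l ≤ u (l + 1))
    (hv : ∀ l, l < m → v (l + 1) ≤ v l)
    (hA0 : ∀ i ∈ Finset.Ioc c (u m), A i ≠ 0)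
    (hAd : ∀ i ∈ Finset.Ioc c (u m), ∀ i' ∈ Finset.Ioc c (u m), i ≠ i' →
      cross (A i) (A i') ≠ 0)
    (hB0 : ∀ j ∈ Finset.Ioc (v m) (v 0), B j ≠ 0)
    (hBd : ∀ j ∈ Finset.Ioc (v m) (v 0), ∀ j' ∈ Finset.Ioc (v m) (v 0), j ≠ j' →
      cross (B j) (B j') ≠ 0) :
    Ideal.span ((fun l => (∏ i ∈ Finset.Ioc c (u l), Hf (A i)) *
        ∏ j ∈ Finset.Ioc (v m) (v l), Vf (B j)) '' Set.Iic m) =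
      ⨅ l ∈ Finset.range m, ⨅ i ∈ Finset.Ioc (u l) (u (l + 1)),
        Ideal.span {Hf (A i), ∏ j ∈ Finset.Ioc (v m) (v l), Vf (B j)} := by
  induction m with
  | zero =>
      have h1 : Set.Iic (0 : ℕ) = {0} := by ext x; simp [Nat.le_zero]
      simp [h1, hu0, Ideal.span_singleton_eq_top]
  | succ m ih =>
      have humono := steps_mono hu
      have hvanti := steps_anti hv
      set W : R := ∏ j ∈ Finset.Ioc (v (m + 1)) (v m), Vf (B j) with hW
      set G : R := ∏ i ∈ Finset.Ioc c (u (m + 1)), Hf (A i) with hG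
      apply le_antisymm
      · -- easy inclusion
        apply Ideal.span_le.2
        rintro g ⟨l, hl, rfl⟩
        simp only [Set.mem_Iic] at hl
        rw [SetLike.mem_coe, mem_biInf_iff]
        intro l' hl'
        rw [Finset.mem_range] at hl'
        rw [mem_biInf_iff]
        intro i hi
        rw [Finset.mem_Ioc] at hi
        by_cases hll : l' < l
        · refine dvd_mem_span_pair_left ?_
          refine Dvd.dvd.mul_right ?_ _
          refine Finset.dvd_prod_of_mem _ ?_
          rw [Finset.mem_Ioc]
          have : u 0 ≤ u l' := humono 0 l' (by omega) (by omega)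
          have : u (l' + 1) ≤ u l := humono (l' + 1) l (by omega) (by omega)
          omega
        · refine dvd_mem_span_pair_right ?_
          refine Dvd.dvd.mul_left ?_ _
          refine Finset.prod_dvd_prod_of_subset _ _ _ ?_
          apply Finset.Ioc_subset_Ioc le_rfl
          exact hvanti l l' (by omega) (by omega)
      · -- hard inclusion
        intro p hp
        -- Step A : p ∈ span {G, W}
        have hpGW : p ∈ Ideal.span {G, W} := by
          rw [hG, hW, col_lemma A B _ _
            (fun i hi => hA0 i hi)
            (fun i hi i' hi' h => hAd i hi i' hi' h)
            (fun j hj => hB0 j (Finset.Ioc_subset_Ioc le_rfl (hvanti 0 m (by omega) (by omega)) hj))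
            (fun j hj j' hj' h => hBd j
              (Finset.Ioc_subset_Ioc le_rfl (hvanti 0 m (by omega) (by omega)) hj) j'
              (Finset.Ioc_subset_Ioc le_rfl (hvanti 0 m (by omega) (by omega)) hj') h)]
          rw [mem_biInf_iff]
          intro i hi
          rw [Finset.mem_Ioc] at hi
          obtain ⟨l, hlm, hl1, hl2⟩ := exists_block (by omega : u 0 < i) hi.2
          have hpi : p ∈ Ideal.span {Hf (A i),
              ∏ j ∈ Finset.Ioc (v (m + 1)) (v l), Vf (B j)} :=
            mem_biInf_iff.1 (mem_biInf_iff.1 hp l (Finset.mem_range.2 hlm)) i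
              (Finset.mem_Ioc.2 ⟨hl1, hl2⟩)
          refine Ideal.span_le.2 ?_ hpi
          rintro g (rfl | rfl)
          · exact Ideal.subset_span (Set.mem_insert _ _)
          · refine dvd_mem_span_pair_right ?_
            refine Finset.prod_dvd_prod_of_subset _ _ _ ?_
            apply Finset.Ioc_subset_Ioc le_rfl
            exact hvanti l m (by omega) (by omega)
        obtain ⟨x, y, hxy⟩ := Ideal.mem_span_pair.1 hpGW
        -- Step B : y lies in all the smaller column ideals
        have hycol : ∀ l, l < m → ∀ i ∈ Finset.Ioc (u l) (u (l + 1)),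
            y ∈ Ideal.span {Hf (A i), ∏ j ∈ Finset.Ioc (v m) (v l), Vf (B j)} := by
          intro l hlm i hi
          rw [Finset.mem_Ioc] at hi
          have hic : c < i := by
            have : u 0 ≤ u l := humono 0 l (by omega) (by omega)
            omega
          have hium : i ≤ u (m + 1) := le_trans hi.2 (humono (l + 1) (m + 1) (by omega) le_rfl)
          have hAi : A i ≠ 0 := hA0 i (Finset.mem_Ioc.2 ⟨hic, hium⟩)
          have hpi : p ∈ Ideal.span {Hf (A i),
              ∏ j ∈ Finset.Ioc (v (m + 1)) (v l), Vf (B j)} :=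
            mem_biInf_iff.1 (mem_biInf_iff.1 hp l (Finset.mem_range.2 (by omega))) i
              (Finset.mem_Ioc.2 hi)
          have hxG : x * G ∈ Ideal.span {Hf (A i),
              ∏ j ∈ Finset.Ioc (v (m + 1)) (v l), Vf (B j)} := by
            apply Ideal.mul_mem_left
            refine dvd_mem_span_pair_left ?_
            exact Finset.dvd_prod_of_mem _ (Finset.mem_Ioc.2 ⟨hic, hium⟩)
          have hyW : y * W ∈ Ideal.span {Hf (A i),
              ∏ j ∈ Finset.Ioc (v (m + 1)) (v l), Vf (B j)} := by
            have heq : y * W = p - x * G := by linear_combination hxy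
            rw [heq]; exact Ideal.sub_mem _ hpi hxG
          have hvm1 : v (m + 1) ≤ v m := hv m (by omega)
          have hvlm : v m ≤ v l := hvanti l m (by omega) (by omega)
          have hvl0 : v l ≤ v 0 := hvanti 0 l (by omega) (by omega)
          have hyj : ∀ j ∈ Finset.Ioc (v m) (v l),
              y ∈ Ideal.span {Hf (A i), Vf (B j)} := by
            intro j hj
            rw [Finset.mem_Ioc] at hj
            have hBj : B j ≠ 0 := hB0 j (Finset.mem_Ioc.2 ⟨by omega, by omega⟩)
            have hyWj : y * W ∈ Ideal.span {Hf (A i), Vf (B j)} := by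
              refine Ideal.span_le.2 ?_ hyW
              rintro g (rfl | rfl)
              · exact Ideal.subset_span (Set.mem_insert _ _)
              · exact dvd_mem_span_pair_right
                  (Finset.dvd_prod_of_mem _ (Finset.mem_Ioc.2 ⟨by omega, by omega⟩))
            refine mem_of_mul_mem hAi hBj hyWj ?_
            refine phi_prodV_ne _ hBj _ B ?_
            intro j' hj'
            rw [Finset.mem_Ioc] at hj'
            exact hBd j' (Finset.mem_Ioc.2 ⟨by omega, by omega⟩) j
              (Finset.mem_Ioc.2 ⟨by omega, by omega⟩) (by omega)
          rw [row_lemma (A i) hAi B _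
            (fun j hj => hB0 j (by rw [Finset.mem_Ioc] at hj ⊢; omega))
            (fun j hj j' hj' h => hBd j (by rw [Finset.mem_Ioc] at hj ⊢; omega) j'
              (by rw [Finset.mem_Ioc] at hj' ⊢; omega) h)]
          exact mem_biInf_iff.2 hyj
        -- Step B' : apply the induction hypothesis to y
        have hyIH : y ∈ Ideal.span ((fun l => (∏ i ∈ Finset.Ioc c (u l), Hf (A i)) *
            ∏ j ∈ Finset.Ioc (v m) (v l), Vf (B j)) '' Set.Iic m) := by
          rw [ih (fun l hl => hu l (by omega)) (fun l hl => hv l (by omega))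
            (fun i hi => hA0 i (Finset.Ioc_subset_Ioc le_rfl
              (humono m (m + 1) (by omega) le_rfl) hi))
            (fun i hi i' hi' h => hAd i (Finset.Ioc_subset_Ioc le_rfl
              (humono m (m + 1) (by omega) le_rfl) hi) i' (Finset.Ioc_subset_Ioc le_rfl
              (humono m (m + 1) (by omega) le_rfl) hi') h)
            (fun j hj => hB0 j (Finset.Ioc_subset_Ioc (hv m (by omega)) le_rfl hj))
            (fun j hj j' hj' h => hBd j (Finset.Ioc_subset_Ioc (hv m (by omega)) le_rfl hj) j'
              (Finset.Ioc_subset_Ioc (hv m (by omega)) le_rfl hj') h)]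
          rw [mem_biInf_iff]
          intro l hl
          rw [mem_biInf_iff]
          intro i hi
          exact hycol l (Finset.mem_range.1 hl) i hi
        -- Step C : assemble
        have hGmem : G ∈ Ideal.span ((fun l => (∏ i ∈ Finset.Ioc c (u l), Hf (A i)) *
            ∏ j ∈ Finset.Ioc (v (m + 1)) (v l), Vf (B j)) '' Set.Iic (m + 1)) := by
          apply Ideal.subset_span
          refine ⟨m + 1, Set.mem_Iic.2 le_rfl, ?_⟩
          simp [hG]
        have hyWmem : y * W ∈ Ideal.span ((fun l => (∏ i ∈ Finset.Ioc c (u l), Hf (A i)) *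
            ∏ j ∈ Finset.Ioc (v (m + 1)) (v l), Vf (B j)) '' Set.Iic (m + 1)) := by
          refine Submodule.span_induction ?_ ?_ ?_ ?_ hyIH
          · rintro z ⟨l, hl, rfl⟩
            simp only [Set.mem_Iic] at hl
            have heq : ((∏ i ∈ Finset.Ioc c (u l), Hf (A i)) *
                ∏ j ∈ Finset.Ioc (v m) (v l), Vf (B j)) * W =
                (∏ i ∈ Finset.Ioc c (u l), Hf (A i)) *
                ∏ j ∈ Finset.Ioc (v (m + 1)) (v l), Vf (B j) := by
              rw [hW, mul_comm _ (∏ j ∈ Finset.Ioc (v (m + 1)) (v m), Vf (B j)), ← mul_assoc,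
                mul_comm (∏ j ∈ Finset.Ioc (v (m + 1)) (v m), Vf (B j)) _, mul_assoc,
                Finset.prod_Ioc_consecutive _ (hv m (by omega)) (hvanti l m (by omega) (by omega))]
            rw [heq]
            exact Ideal.subset_span ⟨l, Set.mem_Iic.2 (by omega), rfl⟩
          · simp
          · intro z w _ _ hz hw
            rw [add_mul]; exact Ideal.add_mem _ hz hw
          · intro r z _ hz
            rw [smul_eq_mul, mul_assoc]
            exact Ideal.mul_mem_left _ _ hz
        rw [← hxy]
        exact Ideal.add_mem _ (Ideal.mul_mem_left _ _ hGmem) hyWmem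

lemma steps_smono {u : ℕ → ℕ} {m : ℕ} (h : ∀ l, l < m → u l < u (l + 1)) :
    ∀ l l', l < l' → l' ≤ m → u l < u l' := by
  intro l l' h1 h2
  induction l' with
  | zero => omega
  | succ n ih =>
      rcases Nat.lt_succ_iff_lt_or_eq.1 h1 with hlt | rfl
      · exact lt_trans (ih hlt (by omega)) (h n (by omega))
      · exact h l (by omega)

lemma prod_split (f : ℕ → R) {a N : ℕ} (h : a ≤ N) :
    ∏ i ∈ Finset.Icc 1 N, f i = (∏ i ∈ Finset.Icc 1 a, f i) * ∏ i ∈ Finset.Ioc a N, f i := by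
  rw [show Finset.Icc 1 N = Finset.Ioc 0 N from Finset.Icc_add_one_left_eq_Ioc 0 N,
    show Finset.Icc 1 a = Finset.Ioc 0 a from Finset.Icc_add_one_left_eq_Ioc 0 a,
    Finset.prod_Ioc_consecutive f (Nat.zero_le a) h]


/-- Theorem 4.4: the ideal generated by any nonempty subset {f_k : k ∈ K} of the
staircase generators is ⟨H₁⋯H_a · V₁⋯V_b⟩ * I_Y for some a ≤ t_r, b ≤ s_r and some
(possibly empty) Ferrers configuration Y built on the points {Aᵢ : a < i ≤ t_r} and
{Bⱼ : b < j ≤ s_r}; i.e. it is the defining ideal of a union of lines and ACM points. -/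
theorem statement9 (S : Staircase) (K : Set ℕ) (hKne : K.Nonempty)
    (hKr : K ⊆ Set.Iic S.r) :
    ∃ a b : ℕ, a ≤ S.t S.r ∧ b ≤ S.s S.r ∧
      ∃ Y : Set ((ℂ × ℂ) × (ℂ × ℂ)),
        (Y = ∅ ∨ IsFerrers Y) ∧
        Y ⊆ {P | ∃ i j, a < i ∧ i ≤ S.t S.r ∧ b < j ∧ j ≤ S.s S.r ∧
          P = (S.A i, S.B j)} ∧
        Ideal.span (stairGen S '' K) =
          Ideal.span {(∏ i ∈ Finset.Icc 1 a, Hf (S.A i)) *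
              ∏ j ∈ Finset.Icc 1 b, Vf (S.B j)} * IptsSet Y := by
  classical
  have hKfin : K.Finite := Set.Finite.subset (Set.finite_Iic S.r) hKr
  set KF : Finset ℕ := hKfin.toFinset with hKF
  have hKFne : KF.Nonempty := by
    obtain ⟨k, hk⟩ := hKne
    exact ⟨k, (Set.Finite.mem_toFinset hKfin).2 hk⟩
  have hn1 : 1 ≤ KF.card := Finset.card_pos.2 hKFne
  set m : ℕ := KF.card - 1 with hm
  set ee : ℕ → ℕ := fun l => KF.orderEmbOfFin rfl ⟨min l m, by omega⟩ with hee
  have hee_mem : ∀ l, ee l ∈ K := fun l =>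
    (Set.Finite.mem_toFinset hKfin).1 (Finset.orderEmbOfFin_mem KF rfl _)
  have hee_r : ∀ l, ee l ≤ S.r := fun l => hKr (hee_mem l)
  have hee_mono : ∀ l l', l ≤ l' → ee l ≤ ee l' := by
    intro l l' h
    exact (KF.orderEmbOfFin rfl).monotone (by simp [Fin.le_def]; omega)
  have hee_strict : ∀ l l', l < l' → l' ≤ m → ee l < ee l' := by
    intro l l' h h'
    exact (KF.orderEmbOfFin rfl).strictMono (by simp [Fin.lt_def]; omega)
  have hee_surj : ∀ k ∈ K, ∃ l, l ≤ m ∧ ee l = k := by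
    intro k hk
    have : k ∈ Set.range (KF.orderEmbOfFin rfl) := by
      rw [Finset.range_orderEmbOfFin]
      exact (Set.Finite.mem_toFinset hKfin).2 hk
    obtain ⟨i, hi⟩ := this
    refine ⟨i.1, by omega, ?_⟩
    rw [hee]
    simp only
    rw [show (⟨min i.1 m, by omega⟩ : Fin KF.card) = i from Fin.ext (by simp; omega)]
    exact hi
  -- monotonicity of t and s
  have ht_mono : ∀ k k', k ≤ k' → k' ≤ S.r → S.t k ≤ S.t k' :=
    steps_mono (fun l hl => le_of_lt (S.ht l hl))
  have hs_mono : ∀ k k', k ≤ k' → k' ≤ S.r → S.s k ≤ S.s k' :=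
    steps_mono (fun l hl => le_of_lt (S.hs l hl))
  have ht_strict : ∀ k k', k < k' → k' ≤ S.r → S.t k < S.t k' :=
    steps_smono S.ht
  have hs_strict : ∀ k k', k < k' → k' ≤ S.r → S.s k < S.s k' :=
    steps_smono S.hs
  -- the staircase data after removing the common factor
  set u : ℕ → ℕ := fun l => S.t (ee l) with hud
  set v : ℕ → ℕ := fun l => S.s (S.r - ee l) with hvd
  set c : ℕ := u 0 with hc
  set b : ℕ := v m with hb
  have hu : ∀ l, l < m → u l < u (l + 1) := by
    intro l hl
    exact ht_strict _ _ (hee_strict l (l + 1) (by omega) (by omega)) (hee_r _)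
  have hv : ∀ l, l < m → v (l + 1) < v l := by
    intro l hl
    have h1 : ee l < ee (l + 1) := hee_strict l (l + 1) (by omega) (by omega)
    have h2 : ee (l + 1) ≤ S.r := hee_r _
    exact hs_strict _ _ (by omega) (by omega)
  have humono : ∀ l l', l ≤ l' → l' ≤ m → u l ≤ u l' :=
    steps_mono (fun l hl => le_of_lt (hu l hl))
  have hvanti : ∀ l l', l ≤ l' → l' ≤ m → v l' ≤ v l :=
    steps_anti (fun l hl => le_of_lt (hv l hl))
  have hcr : c ≤ S.t S.r := ht_mono _ _ (hee_r 0) le_rfl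
  have hbr : b ≤ S.s S.r := hs_mono _ _ (by omega) le_rfl
  have humr : u m ≤ S.t S.r := ht_mono _ _ (hee_r m) le_rfl
  have hv0r : v 0 ≤ S.s S.r := hs_mono _ _ (by omega) le_rfl
  -- nondegeneracy on the reduced ranges
  have hA0' : ∀ i ∈ Finset.Ioc c (u m), S.A i ≠ 0 := by
    intro i hi
    rw [Finset.mem_Ioc] at hi
    exact S.hA0 i (Finset.mem_Icc.2 ⟨by omega, by omega⟩)
  have hAd' : ∀ i ∈ Finset.Ioc c (u m), ∀ i' ∈ Finset.Ioc c (u m), i ≠ i' →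
      cross (S.A i) (S.A i') ≠ 0 := by
    intro i hi i' hi' h
    rw [Finset.mem_Ioc] at hi hi'
    exact S.hAd i (Finset.mem_Icc.2 ⟨by omega, by omega⟩) i'
      (Finset.mem_Icc.2 ⟨by omega, by omega⟩) h
  have hB0' : ∀ j ∈ Finset.Ioc b (v 0), S.B j ≠ 0 := by
    intro j hj
    rw [Finset.mem_Ioc] at hj
    exact S.hB0 j (Finset.mem_Icc.2 ⟨by omega, by omega⟩)
  have hBd' : ∀ j ∈ Finset.Ioc b (v 0), ∀ j' ∈ Finset.Ioc b (v 0), j ≠ j' →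
      cross (S.B j) (S.B j') ≠ 0 := by
    intro j hj j' hj' h
    rw [Finset.mem_Ioc] at hj hj'
    exact S.hBd j (Finset.mem_Icc.2 ⟨by omega, by omega⟩) j'
      (Finset.mem_Icc.2 ⟨by omega, by omega⟩) h
  have hmain := main_lemma S.A S.B m c u v hc.symm (fun l hl => le_of_lt (hu l hl))
    (fun l hl => le_of_lt (hv l hl)) hA0' hAd' hB0' hBd'
  -- the common factor
  set cF : R := (∏ i ∈ Finset.Icc 1 c, Hf (S.A i)) * ∏ j ∈ Finset.Icc 1 b, Vf (S.B j) with hcF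
  -- factorization of the staircase generators
  have hfact : ∀ l, l ≤ m → stairGen S (ee l) =
      cF * ((∏ i ∈ Finset.Ioc c (u l), Hf (S.A i)) *
        ∏ j ∈ Finset.Ioc b (v l), Vf (S.B j)) := by
    intro l hl
    have h1 : c ≤ S.t (ee l) := ht_mono _ _ (hee_mono 0 l (by omega)) (hee_r l)
    have h2 : b ≤ S.s (S.r - ee l) := by
      refine hs_mono _ _ ?_ (by omega)
      have := hee_mono l m hl
      omega
    rw [stairGen, prod_split _ h1, prod_split _ h2, hcF]
    ring
  have hset : stairGen S '' K =
      (fun l => cF * ((∏ i ∈ Finset.Ioc c (u l), Hf (S.A i)) *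
        ∏ j ∈ Finset.Ioc b (v l), Vf (S.B j))) '' Set.Iic m := by
    apply Set.Subset.antisymm
    · rintro _ ⟨k, hk, rfl⟩
      obtain ⟨l, hl, rfl⟩ := hee_surj k hk
      exact ⟨l, Set.mem_Iic.2 hl, (hfact l hl).symm⟩
    · rintro _ ⟨l, hl, rfl⟩
      exact ⟨ee l, hee_mem l, hfact l (Set.mem_Iic.1 hl)⟩
  -- the ideal identity with the triple infimum
  have hspan1 : Ideal.span (stairGen S '' K) = Ideal.span {cF} *
      Ideal.span ((fun l => (∏ i ∈ Finset.Ioc c (u l), Hf (S.A i)) *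
        ∏ j ∈ Finset.Ioc b (v l), Vf (S.B j)) '' Set.Iic m) := by
    rw [hset, Ideal.span_mul_span', Set.singleton_mul, ← Set.image_image]
  -- the points
  set Y : Set ((ℂ × ℂ) × (ℂ × ℂ)) := {P | ∃ l, l < m ∧ ∃ i ∈ Finset.Ioc (u l) (u (l + 1)),
    ∃ j ∈ Finset.Ioc b (v l), P = (S.A i, S.B j)} with hY
  have hIY : IptsSet Y = ⨅ l ∈ Finset.range m, ⨅ i ∈ Finset.Ioc (u l) (u (l + 1)),
      Ideal.span {Hf (S.A i), ∏ j ∈ Finset.Ioc b (v l), Vf (S.B j)} := by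
    have hrow : ∀ l, l < m → ∀ i ∈ Finset.Ioc (u l) (u (l + 1)),
        Ideal.span {Hf (S.A i), ∏ j ∈ Finset.Ioc b (v l), Vf (S.B j)} =
          ⨅ j ∈ Finset.Ioc b (v l), Ideal.span {Hf (S.A i), Vf (S.B j)} := by
      intro l hl i hi
      rw [Finset.mem_Ioc] at hi
      have hiu : i ∈ Finset.Ioc c (u m) := by
        rw [Finset.mem_Ioc]
        constructor
        · have := humono 0 l (by omega) (by omega); omega
        · exact le_trans hi.2 (humono (l + 1) m (by omega) le_rfl)
      refine row_lemma (S.A i) (hA0' i hiu) S.B _ ?_ ?_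
      · intro j hj
        rw [Finset.mem_Ioc] at hj
        have := hvanti l m (by omega) le_rfl
        have := hvanti 0 l (by omega) (by omega)
        exact hB0' j (Finset.mem_Ioc.2 ⟨by omega, by omega⟩)
      · intro j hj j' hj' h
        rw [Finset.mem_Ioc] at hj hj'
        have := hvanti 0 l (by omega) (by omega)
        exact hBd' j (Finset.mem_Ioc.2 ⟨by omega, by omega⟩) j'
          (Finset.mem_Ioc.2 ⟨by omega, by omega⟩) h
    ext p
    simp only [IptsSet, Submodule.mem_iInf, mem_biInf_iff]
    constructor
    · intro h l hl i hi
      rw [hrow l (Finset.mem_range.1 hl) i hi, mem_biInf_iff]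
      intro j hj
      exact h (S.A i, S.B j) ⟨l, Finset.mem_range.1 hl, i, hi, j, hj, rfl⟩
    · rintro h P ⟨l, hl, i, hi, j, hj, rfl⟩
      have := h l (Finset.mem_range.2 hl) i hi
      rw [hrow l hl i hi, mem_biInf_iff] at this
      exact this j hj
  have hYgrid : Y ⊆ {P | ∃ i j, c < i ∧ i ≤ S.t S.r ∧ b < j ∧ j ≤ S.s S.r ∧
      P = (S.A i, S.B j)} := by
    rintro P ⟨l, hl, i, hi, j, hj, rfl⟩
    rw [Finset.mem_Ioc] at hi hj
    refine ⟨i, j, ?_, ?_, ?_, ?_, rfl⟩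
    · have := humono 0 l (by omega) (by omega); omega
    · have := humono (l + 1) m (by omega) le_rfl; omega
    · omega
    · have := hvanti 0 l (by omega) (by omega); omega
  refine ⟨c, b, hcr, hbr, Y, ?_, hYgrid, ?_⟩
  · by_cases hm0 : m = 0
    · left
      rw [hY]
      ext P
      simp [hm0]
    · right
      have hm1 : 1 ≤ m := by omega
      set L : ℕ → ℕ := fun i0 => Nat.findGreatest (fun l => u l < i0) m with hLdef
      have hL : ∀ i0, c < i0 → i0 ≤ u m →
          u (L i0) < i0 ∧ L i0 < m ∧ i0 ≤ u (L i0 + 1) := by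
        intro i0 h1 h2
        have hP0 : u 0 < i0 := by omega
        have hspec : u (L i0) < i0 := Nat.findGreatest_spec (P := fun l => u l < i0) (Nat.zero_le m) hP0
        have hle : L i0 ≤ m := Nat.findGreatest_le m
        have hlt : L i0 < m := by
          rcases eq_or_lt_of_le hle with h | h
          · rw [h] at hspec; omega
          · exact h
        have hup : i0 ≤ u (L i0 + 1) := by
          by_contra hcon
          push_neg at hcon
          have h5 : L i0 + 1 ≤ L i0 :=
            Nat.le_findGreatest (P := fun l => u l < i0) (show L i0 + 1 ≤ m by omega) hcon
          omega
        exact ⟨hspec, hlt, hup⟩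
      have hLuniq : ∀ l, l < m → ∀ i0, u l < i0 → i0 ≤ u (l + 1) → L i0 = l := by
        intro l hl i0 h1 h2
        have hge : l ≤ L i0 := Nat.le_findGreatest (P := fun l' => u l' < i0) (by omega) h1
        have hc0 : c < i0 := by have := humono 0 l (by omega) (by omega); omega
        have hum : i0 ≤ u m := le_trans h2 (humono (l + 1) m (by omega) le_rfl)
        obtain ⟨hs', hlm, hup⟩ := hL i0 hc0 hum
        by_contra hne
        have h3 : l + 1 ≤ L i0 := by omega
        have := humono (l + 1) (L i0) h3 (by omega)
        omega
      have hLmono : ∀ i0 i0', i0 ≤ i0' → L i0 ≤ L i0' :=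
        fun i0 i0' h => Nat.findGreatest_mono (P := fun l => u l < i0) (Q := fun l => u l < i0') (fun l hl => by omega) le_rfl
      have hL1 : L (c + 1) = 0 := by
        refine hLuniq 0 (by omega) (c + 1) (by omega) ?_
        have := hu 0 (by omega)
        omega
      have hum0 : u 0 < u m := steps_smono hu 0 m (by omega) le_rfl
      refine ⟨u m - c, fun i => v (L (c + i)) - b, fun i => S.A (c + i),
        fun j => S.B (b + j), by omega, ?_, ?_, ?_, ?_, ?_, ?_, ?_⟩
      · -- α ≥ 1
        intro i h1 h2
        show 1 ≤ v (L (c + i)) - b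
        obtain ⟨hs', hlm, hup⟩ := hL (c + i) (by omega) (by omega)
        have hv1 := hv (L (c + i)) hlm
        have hv2 := hvanti (L (c + i) + 1) m (by omega) le_rfl
        omega
      · -- α antitone
        intro i h1 h2
        show v (L (c + (i + 1))) - b ≤ v (L (c + i)) - b
        have hmono := hLmono (c + i) (c + (i + 1)) (by omega)
        have := hvanti (L (c + i)) (L (c + (i + 1))) hmono (Nat.findGreatest_le m)
        omega
      · -- A ≠ 0
        intro i h1 h2
        exact S.hA0 (c + i) (Finset.mem_Icc.2 ⟨by omega, by omega⟩)
      · -- B ≠ 0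
        intro j h1 h2
        have h2' : j ≤ v (L (c + 1)) - b := h2
        rw [hL1] at h2'
        exact S.hB0 (b + j) (Finset.mem_Icc.2 ⟨by omega, by omega⟩)
      · -- cross A
        intro i i' h1 h2 h3 h4 h5
        exact S.hAd (c + i) (Finset.mem_Icc.2 ⟨by omega, by omega⟩) (c + i')
          (Finset.mem_Icc.2 ⟨by omega, by omega⟩) (by omega)
      · -- cross B
        intro j j' h1 h2 h3 h4 h5
        have h2' : j ≤ v (L (c + 1)) - b := h2
        have h4' : j' ≤ v (L (c + 1)) - b := h4
        rw [hL1] at h2' h4'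
        exact S.hBd (b + j) (Finset.mem_Icc.2 ⟨by omega, by omega⟩) (b + j')
          (Finset.mem_Icc.2 ⟨by omega, by omega⟩) (by omega)
      · -- the set description
        rw [hY]
        ext P
        simp only [Set.mem_setOf_eq]
        constructor
        · rintro ⟨l, hl, i, hi, j, hj, rfl⟩
          rw [Finset.mem_Ioc] at hi hj
          have hc0 : c < i := by have := humono 0 l (by omega) (by omega); omega
          have hum : i ≤ u m := le_trans hi.2 (humono (l + 1) m (by omega) le_rfl)
          have hLi : L i = l := hLuniq l hl i hi.1 hi.2
          refine ⟨i - c, j - b, by omega, by omega, by omega, ?_, ?_⟩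
          · have hci : c + (i - c) = i := by omega
            show j - b ≤ v (L (c + (i - c))) - b
            rw [hci, hLi]
            omega
          · have hci : c + (i - c) = i := by omega
            have hbj : b + (j - b) = j := by omega
            show (S.A i, S.B j) = (S.A (c + (i - c)), S.B (b + (j - b)))
            rw [hci, hbj]
        · rintro ⟨i', j', h1, h2, h3, h4, rfl⟩
          have h2' : i' ≤ u m - c := h2
          have h4' : j' ≤ v (L (c + i')) - b := h4
          obtain ⟨hs', hlm, hup⟩ := hL (c + i') (by omega) (by omega)
          refine ⟨L (c + i'), hlm, c + i', Finset.mem_Ioc.2 ⟨hs', hup⟩,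
            b + j', Finset.mem_Ioc.2 ⟨by omega, by omega⟩, rfl⟩
  · rw [hspan1, hmain, hIY]
end
end
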